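/- arXiv:2308.02701 — 2 statements merged into one kernel-verified Lean document; each statement's English description precedes it below -/
import Mathlib

section
/- Let A be an invertible N×N complex lower band matrix of order r. Suppose A = U·R where R is an invertible upper triangular matrix and U = Ũ_1·Ũ_2⋯Ũ_{N−r+1} (product in increasing order of indices) with embedded factors built from unitary matrices U_k ∈ ℂ^{(r+1)×(r+1)} (k = 1,…,N−r) and a unitary matrix U_{N−r+1} ∈ ℂ^{r×r}. Partition U_k^* = [[p_U(k), d_U(k)],[a_U(k), q_U(k)]] (blocks of sizes 1×r, 1×1, r×r, r×1) for k = 1,…,N−r. Set x_k = R(k,k) and X_k = R(k, k+1:N). Define q(k) = q_U(k) and a(k) = a_U(k) for k = 1,…,N−r; set P_{N−r+1} = (R(N−r+1:N, N−r+1:N))⁻¹·U_{N−r+1}^*; and for k = N−r,…,1 set p(k) = (1/x_k)·(p_U(k) − X_k·P_{k+1}·a(k)) and P_k = (p(k); P_{k+1}·a(k)) (the row p(k) stacked above P_{k+1}·a(k)). Then p(i), q(i), a(i) (i = 1,…,N−r) together with p(N−r+1) := P_{N−r+1} are lower Green generators of A⁻¹. -/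
open Matrix

noncomputable section

/-- `A(i,j) = 0` whenever `i - j > r` (1-based; identical in 0-based `Fin` indexing). -/
def IsLowerBand (N r : ℕ) (A : Matrix (Fin N) (Fin N) ℂ) : Prop :=
  ∀ i j : Fin N, (j : ℕ) + r < (i : ℕ) → A i j = 0

/-- `A(i,j) = 0` whenever `j - i > r`. -/
def IsUpperBand (N r : ℕ) (A : Matrix (Fin N) (Fin N) ℂ) : Prop :=
  ∀ i j : Fin N, (i : ℕ) + r < (j : ℕ) → A i j = 0

/-- `rank B(k:N, 1:k+r-1) ≤ r` for every `k = 1, …, N-r` (1-based). -/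
def IsLowerGreen (N r : ℕ) (B : Matrix (Fin N) (Fin N) ℂ) : Prop :=
  ∀ (k : ℕ) (hk1 : 1 ≤ k) (hk2 : k ≤ N - r),
    (B.submatrix
      (fun i : Fin (N - k + 1) => (⟨k - 1 + (i : ℕ), by have := i.isLt; omega⟩ : Fin N))
      (fun j : Fin (k + r - 1) => (⟨(j : ℕ), by have := j.isLt; omega⟩ : Fin N))).rank ≤ r

/-- `rank B(1:k+r-1, k:N) ≤ r` for every `k = 1, …, N-r` (1-based). -/
def IsUpperGreen (N r : ℕ) (B : Matrix (Fin N) (Fin N) ℂ) : Prop :=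
  ∀ (k : ℕ) (hk1 : 1 ≤ k) (hk2 : k ≤ N - r),
    (B.submatrix
      (fun i : Fin (k + r - 1) => (⟨(i : ℕ), by have := i.isLt; omega⟩ : Fin N))
      (fun j : Fin (N - k + 1) => (⟨k - 1 + (j : ℕ), by have := j.isLt; omega⟩ : Fin N))).rank ≤ r

/-- `a^>_{i,s} = a(i-1) a(i-2) ⋯ a(s+1)`, equal to `I_r` when `s ≥ i - 1`. -/
def aGT (r : ℕ) (a : ℕ → Matrix (Fin r) (Fin r) ℂ) (i s : ℕ) :
    Matrix (Fin r) (Fin r) ℂ :=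
  (((List.range' (s + 1) (i - 1 - s)).reverse).map a).prod

/-- `p(i) ∈ ℂ^{1×r}` (i = 1,…,N−r), `pLast = p(N−r+1) ∈ ℂ^{r×r}`, `q(j) ∈ ℂ^{r×1}`,
`a(k) ∈ ℂ^{r×r}` are lower Green generators of the `N×N` matrix `B`:
`B(i,1:r) = p(i)·a^>_{i,0}`, `B(i,r+s-1) = p(i)·a^>_{i,s-1}·q(s-1)` for `2 ≤ s ≤ i ≤ N-r`,
and the analogous identities for the last `r` rows `B(N-r+1:N, ·)` with `pLast`. -/
def IsLowerGreenGenerators (N r : ℕ) (hNr : r < N)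
    (p : ℕ → Matrix (Fin 1) (Fin r) ℂ) (q : ℕ → Matrix (Fin r) (Fin 1) ℂ)
    (a : ℕ → Matrix (Fin r) (Fin r) ℂ) (pLast : Matrix (Fin r) (Fin r) ℂ)
    (B : Matrix (Fin N) (Fin N) ℂ) : Prop :=
  (∀ (i : ℕ) (hi1 : 1 ≤ i) (hi2 : i ≤ N - r) (j : Fin r),
      B ⟨i - 1, by omega⟩ ⟨(j : ℕ), by have := j.isLt; omega⟩ = (p i * aGT r a i 0) 0 j)
  ∧ (∀ (i : ℕ) (hi1 : 1 ≤ i) (hi2 : i ≤ N - r) (s : ℕ) (hs1 : 2 ≤ s) (hs2 : s ≤ i),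
      B ⟨i - 1, by omega⟩ ⟨r + s - 2, by omega⟩
        = (p i * aGT r a i (s - 1) * q (s - 1)) 0 0)
  ∧ (∀ (t : Fin r) (j : Fin r),
      B ⟨N - r + (t : ℕ), by have := t.isLt; omega⟩ ⟨(j : ℕ), by have := j.isLt; omega⟩
        = (pLast * aGT r a (N - r + 1) 0) t j)
  ∧ (∀ (t : Fin r) (s : ℕ) (hs1 : 2 ≤ s) (hs2 : s ≤ N - r + 1),
      B ⟨N - r + (t : ℕ), by have := t.isLt; omega⟩ ⟨r + s - 2, by omega⟩
        = (pLast * aGT r a (N - r + 1) (s - 1) * q (s - 1)) t 0)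

/-- The embedded factor `I_{k-1} ⊕ M ⊕ I_{N-k-r}` (1-based block position `k`),
i.e. `M` occupies (1-based) rows and columns `k, …, k+r` of an `N×N` identity. -/
def embed (N r k : ℕ) (M : Matrix (Fin (r + 1)) (Fin (r + 1)) ℂ) :
    Matrix (Fin N) (Fin N) ℂ :=
  Matrix.of fun i j =>
    if h : k - 1 ≤ (i : ℕ) ∧ (i : ℕ) < k + r ∧ k - 1 ≤ (j : ℕ) ∧ (j : ℕ) < k + r then
      M ⟨(i : ℕ) - (k - 1), by omega⟩ ⟨(j : ℕ) - (k - 1), by omega⟩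
    else if (i : ℕ) = (j : ℕ) then 1 else 0

/-- The embedded last factor `I_{N-r} ⊕ M`. -/
def embedLast (N r : ℕ) (M : Matrix (Fin r) (Fin r) ℂ) : Matrix (Fin N) (Fin N) ℂ :=
  Matrix.of fun i j =>
    if h : N - r ≤ (i : ℕ) ∧ N - r ≤ (j : ℕ) then
      M ⟨(i : ℕ) - (N - r), by have := i.isLt; omega⟩
        ⟨(j : ℕ) - (N - r), by have := j.isLt; omega⟩
    else if (i : ℕ) = (j : ℕ) then 1 else 0

/-- `G̃_1 · G̃_2 ⋯ G̃_{N-r}` (increasing order of indices). -/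
def prodAsc (N r : ℕ) (G : ℕ → Matrix (Fin (r + 1)) (Fin (r + 1)) ℂ) :
    Matrix (Fin N) (Fin N) ℂ :=
  ((List.range' 1 (N - r)).map (fun k => embed N r k (G k))).prod

/-- `G̃_{N-r} · G̃_{N-r-1} ⋯ G̃_1` (decreasing order of indices). -/
def prodDesc (N r : ℕ) (G : ℕ → Matrix (Fin (r + 1)) (Fin (r + 1)) ℂ) :
    Matrix (Fin N) (Fin N) ℂ :=
  (((List.range' 1 (N - r)).reverse).map (fun k => embed N r k (G k))).prod

/-- The `1×r` block `p` of the partition `M = [[p, d], [a, q]]`. -/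
def blkP (r : ℕ) (M : Matrix (Fin (r + 1)) (Fin (r + 1)) ℂ) : Matrix (Fin 1) (Fin r) ℂ :=
  Matrix.of fun _ j => M 0 j.castSucc

/-- The `1×1` block `d` of the partition `M = [[p, d], [a, q]]`. -/
def blkD (r : ℕ) (M : Matrix (Fin (r + 1)) (Fin (r + 1)) ℂ) : ℂ := M 0 (Fin.last r)

/-- The `r×r` block `a` of the partition `M = [[p, d], [a, q]]`. -/
def blkA (r : ℕ) (M : Matrix (Fin (r + 1)) (Fin (r + 1)) ℂ) : Matrix (Fin r) (Fin r) ℂ :=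
  Matrix.of fun i j => M i.succ j.castSucc

/-- The `r×1` block `q` of the partition `M = [[p, d], [a, q]]`. -/
def blkQ (r : ℕ) (M : Matrix (Fin (r + 1)) (Fin (r + 1)) ℂ) : Matrix (Fin r) (Fin 1) ℂ :=
  Matrix.of fun i _ => M i.succ (Fin.last r)

/-- Assemble the `(r+1)×(r+1)` matrix `[[p, d], [a, q]]` from its blocks. -/
def mkBlk (r : ℕ) (p : Matrix (Fin 1) (Fin r) ℂ) (d : ℂ)
    (a : Matrix (Fin r) (Fin r) ℂ) (q : Matrix (Fin r) (Fin 1) ℂ) :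
    Matrix (Fin (r + 1)) (Fin (r + 1)) ℂ :=
  Matrix.of fun i j =>
    if hi : (i : ℕ) = 0 then
      if hj : (j : ℕ) < r then p 0 ⟨(j : ℕ), hj⟩ else d
    else
      if hj : (j : ℕ) < r then a ⟨(i : ℕ) - 1, by have := i.isLt; omega⟩ ⟨(j : ℕ), hj⟩
      else q ⟨(i : ℕ) - 1, by have := i.isLt; omega⟩ 0

/-- The elementary Gauss factor `[[1, 0_{1×r}], [-f, I_r]]`. -/
def elemL (r : ℕ) (f : Matrix (Fin r) (Fin 1) ℂ) :
    Matrix (Fin (r + 1)) (Fin (r + 1)) ℂ :=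
  Matrix.of fun i j =>
    if hi : (i : ℕ) = 0 then (if (j : ℕ) = 0 then 1 else 0)
    else if hj : (j : ℕ) = 0 then -f ⟨(i : ℕ) - 1, by have := i.isLt; omega⟩ 0
    else if (i : ℕ) = (j : ℕ) then 1 else 0

/-- The elementary factor `[[I_r, 0_{r×1}], [-g, 1]]`. -/
def elemLrow (r : ℕ) (g : Matrix (Fin 1) (Fin r) ℂ) :
    Matrix (Fin (r + 1)) (Fin (r + 1)) ℂ :=
  Matrix.of fun i j =>
    if hi : (i : ℕ) < r then
      (if hj : (j : ℕ) < r then (if (i : ℕ) = (j : ℕ) then 1 else 0) else 0)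
    else if hj : (j : ℕ) < r then -g 0 ⟨(j : ℕ), hj⟩ else 1

/-- All leading principal minors are nonzero. -/
def StronglyRegular (N : ℕ) (A : Matrix (Fin N) (Fin N) ℂ) : Prop :=
  ∀ (k : ℕ) (hk : k ≤ N), 1 ≤ k →
    (A.submatrix (Fin.castLE hk) (Fin.castLE hk)).det ≠ 0


/-!
Since `U` is unitary, `R * A⁻¹ = U* = Ũ_{N-r+1}^* Ũ_{N-r}^* ⋯ Ũ_1^*`. Multiplying in the factors one
at a time, rows `k+1, …, k+r` of `Ũ_k^* ⋯ Ũ_1^*` are the kernel `K_{k+1}` whose columns are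
`a^>_{k+1,0}` and `a^>_{k+1,s-1} q(s-1)`, because `K_{k+1} = a(k) K_k + q(k) e_{k+r}ᵀ`. Hence row
`k ≤ N - r` of `U*` is `p_U(k) K_k` on the columns the generators describe, and its last `r` rows
are `U_{N-r+1}^* K_{N-r+1}`. Back substitution in the triangular system `R * A⁻¹ = U*`, from the
last `r` rows upwards, shows that rows `k, …, N` of `A⁻¹` are `P_k K_k` there: the recursion for
`p(k)` is the back-substitution step and the one for `P_k` is `a(k) K_k = K_{k+1}`.
-/

theorem Fin.sum_univ_eq_sum_window {M : Type*} [AddCommMonoid M] {N : ℕ} (f : Fin N → M)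
    (a w : ℕ) (haw : a + w ≤ N) (hf : ∀ l : Fin N, ((l : ℕ) < a ∨ a + w ≤ (l : ℕ)) → f l = 0) :
    ∑ l, f l = ∑ m : Fin w, f ⟨a + m, by omega⟩ := by
  refine (Finset.sum_of_injOn (fun m : Fin w => (⟨a + m, by omega⟩ : Fin N)) ?_ ?_ ?_ ?_).symm
  · intro m _ m' _ h
    simpa [Fin.ext_iff] using h
  · intro m _
    simp
  · intro l _ hl
    refine hf l (by_contra fun hc => hl ⟨⟨l - a, by omega⟩, by simp, Fin.ext ?_⟩)
    simp only
    omega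
  · intro m _
    rfl

theorem Fin.exists_eq_add_of_window {N s w : ℕ} (hsw : s + w ≤ N) {i : Fin N}
    (h1 : s ≤ (i : ℕ)) (h2 : (i : ℕ) < s + w) :
    ∃ m : Fin w, i = ⟨s + m, Nat.lt_of_lt_of_le (Nat.add_lt_add_left m.isLt s) hsw⟩ :=
  ⟨⟨i - s, by omega⟩, Fin.ext (by simp only; omega)⟩

namespace Matrix

variable {α : Type*}

theorem IsUpperTriangular.isUnit_det_iff [CommRing α] {n : Type*} [Fintype n] [DecidableEq n]
    [LinearOrder n] {M : Matrix n n α} (h : M.IsUpperTriangular) :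
    IsUnit M.det ↔ ∀ i, IsUnit (M i i) := by
  rw [det_of_isUpperTriangular h, IsUnit.prod_univ_iff]

section Triangular

variable [Semiring α] {N : ℕ} {R : Matrix (Fin N) (Fin N) α}

theorem IsUpperTriangular.mul_apply_eq_diag_add {M : Type*} (hR : R.IsUpperTriangular)
    (B : Matrix (Fin N) M α) (k : ℕ) (hk : 1 ≤ k) (hkN : k ≤ N) (c : M) :
    (R * B) ⟨k - 1, by omega⟩ c = R ⟨k - 1, by omega⟩ ⟨k - 1, by omega⟩ * B ⟨k - 1, by omega⟩ c
      + ∑ t : Fin (N - k), R ⟨k - 1, by omega⟩ ⟨k + t, by omega⟩ * B ⟨k + t, by omega⟩ c := by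
  rw [mul_apply, Fin.sum_univ_eq_sum_window _ (k - 1) (N - k + 1) (by omega), Fin.sum_univ_succ]
  · congr 1
    refine Finset.sum_congr rfl fun t _ => ?_
    have hkt : (⟨k - 1 + (t.succ : ℕ), by omega⟩ : Fin N) = ⟨k + t, by omega⟩ :=
      Fin.ext (by simp only [Fin.val_succ]; omega)
    rw [hkt]
  · rintro l (hl | hl)
    · rw [hR (by simp only [id_eq, Fin.lt_def]; omega), zero_mul]
    · omega

theorem IsUpperTriangular.mul_apply_bottom {M : Type*} (hR : R.IsUpperTriangular)
    (B : Matrix (Fin N) M α) {r : ℕ} (hrN : r ≤ N) (s : Fin r) (c : M) :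
    (R * B) ⟨N - r + s, by omega⟩ c =
      ∑ t : Fin r, R ⟨N - r + s, by omega⟩ ⟨N - r + t, by omega⟩ * B ⟨N - r + t, by omega⟩ c := by
  rw [mul_apply, Fin.sum_univ_eq_sum_window _ (N - r) r (by omega)]
  rintro l (hl | hl)
  · rw [hR (by simp only [id_eq, Fin.lt_def]; omega), zero_mul]
  · omega

end Triangular

variable {N : ℕ}

def blockEmbed [Zero α] [One α] (N s : ℕ) {w : ℕ} (M : Matrix (Fin w) (Fin w) α) :
    Matrix (Fin N) (Fin N) α :=
  of fun i j =>
    if h : s ≤ (i : ℕ) ∧ (i : ℕ) < s + w ∧ s ≤ (j : ℕ) ∧ (j : ℕ) < s + w then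
      M ⟨i - s, by omega⟩ ⟨j - s, by omega⟩
    else (1 : Matrix (Fin N) (Fin N) α) i j

section Semiring

variable [Semiring α] {s w : ℕ}

theorem blockEmbed_apply_window (hsw : s + w ≤ N) (M : Matrix (Fin w) (Fin w) α) (m m' : Fin w) :
    blockEmbed N s M ⟨s + m, by omega⟩ ⟨s + m', by omega⟩ = M m m' := by
  simp [blockEmbed]

theorem blockEmbed_apply_of_not_window (M : Matrix (Fin w) (Fin w) α) {i j : Fin N}
    (h : ¬(s ≤ (i : ℕ) ∧ (i : ℕ) < s + w ∧ s ≤ (j : ℕ) ∧ (j : ℕ) < s + w)) :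
    blockEmbed N s M i j = (1 : Matrix (Fin N) (Fin N) α) i j := by
  simp only [blockEmbed, of_apply, dif_neg h]

theorem blockEmbed_mul_apply_window {n : Type*} (hsw : s + w ≤ N) (M : Matrix (Fin w) (Fin w) α)
    (X : Matrix (Fin N) n α) (m : Fin w) (c : n) :
    (blockEmbed N s M * X) ⟨s + m, by omega⟩ c = ∑ m', M m m' * X ⟨s + m', by omega⟩ c := by
  rw [mul_apply, Fin.sum_univ_eq_sum_window _ s w hsw]
  · simp only [blockEmbed_apply_window hsw]
  · intro l hl
    rw [blockEmbed_apply_of_not_window M (by omega), one_apply_ne (by simp [Fin.ext_iff]; omega),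
      zero_mul]

theorem blockEmbed_mul_apply_of_not_window {n : Type*} (M : Matrix (Fin w) (Fin w) α)
    (X : Matrix (Fin N) n α) {i : Fin N} (hi : (i : ℕ) < s ∨ s + w ≤ (i : ℕ)) (c : n) :
    (blockEmbed N s M * X) i c = X i c := by
  rw [mul_apply, Finset.sum_eq_single i]
  · rw [blockEmbed_apply_of_not_window M (by omega), one_apply_eq, one_mul]
  · intro l _ hl
    rw [blockEmbed_apply_of_not_window M (by omega), one_apply_ne hl.symm, zero_mul]
  · simp

theorem blockEmbed_mul_blockEmbed (hsw : s + w ≤ N) (M M' : Matrix (Fin w) (Fin w) α) :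
    blockEmbed N s M * blockEmbed N s M' = blockEmbed N s (M * M') := by
  ext i j
  by_cases hi : s ≤ (i : ℕ) ∧ (i : ℕ) < s + w
  · obtain ⟨m, rfl⟩ := Fin.exists_eq_add_of_window hsw hi.1 hi.2
    rw [blockEmbed_mul_apply_window hsw]
    by_cases hj : s ≤ (j : ℕ) ∧ (j : ℕ) < s + w
    · obtain ⟨m', rfl⟩ := Fin.exists_eq_add_of_window hsw hj.1 hj.2
      simp only [blockEmbed_apply_window hsw, mul_apply]
    · rw [blockEmbed_apply_of_not_window _ (by omega), one_apply_ne (by simp [Fin.ext_iff]; omega)]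
      refine Finset.sum_eq_zero fun m' _ => ?_
      rw [blockEmbed_apply_of_not_window _ (by simp only; omega),
        one_apply_ne (by simp [Fin.ext_iff]; omega), mul_zero]
  · rw [blockEmbed_mul_apply_of_not_window _ _ (by omega),
      blockEmbed_apply_of_not_window _ (by omega), blockEmbed_apply_of_not_window _ (by omega)]

theorem blockEmbed_one : blockEmbed N s (1 : Matrix (Fin w) (Fin w) α) = 1 := by
  ext i j
  simp only [blockEmbed, of_apply, one_apply, Fin.ext_iff]
  split_ifs <;> first | rfl | (exfalso; omega)

theorem conjTranspose_blockEmbed [StarRing α] (M : Matrix (Fin w) (Fin w) α) :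
    (blockEmbed N s M)ᴴ = blockEmbed N s Mᴴ := by
  ext i j
  simp only [blockEmbed, conjTranspose_apply, of_apply, one_apply, Fin.ext_iff]
  split_ifs <;> first | rfl | (exfalso; omega) | simp

end Semiring

theorem blockEmbed_mem_unitaryGroup [CommRing α] [StarRing α] {s w : ℕ} (hsw : s + w ≤ N)
    {M : Matrix (Fin w) (Fin w) α} (hM : M ∈ unitaryGroup (Fin w) α) :
    blockEmbed N s M ∈ unitaryGroup (Fin N) α := by
  rw [mem_unitaryGroup_iff, star_eq_conjTranspose, conjTranspose_blockEmbed,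
    ← star_eq_conjTranspose, blockEmbed_mul_blockEmbed hsw, mem_unitaryGroup_iff.mp hM,
    blockEmbed_one]

end Matrix

theorem embed_eq_blockEmbed {N r : ℕ} (s : ℕ) (M : Matrix (Fin (r + 1)) (Fin (r + 1)) ℂ) :
    embed N r (s + 1) M = blockEmbed N s M := by
  ext i j
  simp only [embed, blockEmbed, of_apply, one_apply, Fin.ext_iff, Nat.add_sub_cancel]
  split_ifs <;> first | rfl | (exfalso; omega)

theorem embedLast_eq_blockEmbed {N r : ℕ} (hrN : r ≤ N) (M : Matrix (Fin r) (Fin r) ℂ) :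
    embedLast N r M = blockEmbed N (N - r) M := by
  ext i j
  simp only [embedLast, blockEmbed, of_apply, one_apply, Fin.ext_iff]
  split_ifs <;> first | rfl | (exfalso; omega)

section GreenKernel

variable {r : ℕ} (a : ℕ → Matrix (Fin r) (Fin r) ℂ) (q : ℕ → Matrix (Fin r) (Fin 1) ℂ)

theorem aGT_of_le {i s : ℕ} (h : i ≤ s + 1) : aGT r a i s = 1 := by
  simp [aGT, show i - 1 - s = 0 by omega]

theorem aGT_succ {i s : ℕ} (h : s + 1 ≤ i) : aGT r a (i + 1) s = a i * aGT r a i s := by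
  rw [aGT, show i + 1 - 1 - s = i - 1 - s + 1 by omega, List.range'_concat,
    show s + 1 + 1 * (i - 1 - s) = i by omega]
  simp [aGT]

/-- Row `i ≤ N - r` (1-based) of a matrix with lower Green generators `p, q, a` is
`p(i) * greenKernel a q N i` on the (0-based) columns `c` with `c + 1 < i + r`, and its last `r`
rows are `p(N-r+1) * greenKernel a q N (N-r+1)`. -/
def greenKernel (N : ℕ) (k : ℕ) : Matrix (Fin r) (Fin N) ℂ :=
  Matrix.of fun m c =>
    if h : (c : ℕ) < r then aGT r a k 0 m ⟨c, h⟩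
    else if (c : ℕ) + 1 < k + r then (aGT r a k (c - r + 1) * q (c - r + 1)) m 0 else 0

variable {N : ℕ}

theorem greenKernel_one_apply (m : Fin r) (c : Fin N) :
    greenKernel a q N 1 m c = if (m : ℕ) = c then 1 else 0 := by
  by_cases hc : (c : ℕ) < r
  · simp [greenKernel, hc, aGT_of_le a (le_refl _), Matrix.one_apply, Fin.ext_iff]
  · simp only [greenKernel, Matrix.of_apply, dif_neg hc,
      if_neg (show ¬(c : ℕ) + 1 < 1 + r by omega), if_neg (show (m : ℕ) ≠ c by omega)]

theorem greenKernel_succ_apply {k : ℕ} (hk : 1 ≤ k) (m : Fin r) (c : Fin N) :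
    greenKernel a q N (k + 1) m c
      = (a k * greenKernel a q N k) m c + if (c : ℕ) = k - 1 + r then q k m 0 else 0 := by
  by_cases hcr : (c : ℕ) < r
  · simp only [greenKernel, Matrix.mul_apply, Matrix.of_apply, dif_pos hcr,
      if_neg (show (c : ℕ) ≠ k - 1 + r by omega), add_zero, aGT_succ a (show 0 + 1 ≤ k by omega)]
  by_cases hck : (c : ℕ) + 1 < k + r
  · have hsucc : greenKernel a q N (k + 1) m c
        = (a k * (aGT r a k (c - r + 1) * q (c - r + 1))) m 0 := by
      simp only [greenKernel, Matrix.of_apply, dif_neg hcr,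
        if_pos (show (c : ℕ) + 1 < k + 1 + r by omega),
        aGT_succ a (show c - r + 1 + 1 ≤ k by omega), Matrix.mul_assoc]
    rw [hsucc, if_neg (show (c : ℕ) ≠ k - 1 + r by omega), add_zero]
    simp only [greenKernel, Matrix.mul_apply, Matrix.of_apply, dif_neg hcr, if_pos hck]
  · have hzero : (a k * greenKernel a q N k) m c = 0 := by
      simp [greenKernel, Matrix.mul_apply, hcr, hck]
    rw [hzero, zero_add]
    by_cases hc : (c : ℕ) = k - 1 + r
    · simp only [greenKernel, Matrix.of_apply, dif_neg hcr, if_pos hc,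
        if_pos (show (c : ℕ) + 1 < k + 1 + r by omega), show c - r + 1 = k by omega,
        aGT_of_le a (le_refl (k + 1)), Matrix.one_mul]
    · simp only [greenKernel, Matrix.of_apply, dif_neg hcr, if_neg hc,
        if_neg (show ¬ (c : ℕ) + 1 < k + 1 + r by omega)]

theorem vecMul_greenKernel_succ_apply {k : ℕ} (hk : 1 ≤ k) (v : Fin r → ℂ) {c : Fin N}
    (hc : (c : ℕ) + 1 < k + r) :
    (v ᵥ* greenKernel a q N (k + 1)) c = (v ᵥ* a k ᵥ* greenKernel a q N k) c := by
  rw [Matrix.vecMul_vecMul]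
  simp only [Matrix.vecMul, dotProduct, greenKernel_succ_apply a q hk,
    if_neg (show (c : ℕ) ≠ k - 1 + r by omega), add_zero]

end GreenKernel

section DescendingProduct

variable {N r : ℕ} (G : ℕ → Matrix (Fin (r + 1)) (Fin (r + 1)) ℂ)

def prodDescUpTo (N r : ℕ) (G : ℕ → Matrix (Fin (r + 1)) (Fin (r + 1)) ℂ) (k : ℕ) :
    Matrix (Fin N) (Fin N) ℂ :=
  (((List.range' 1 k).reverse).map fun j => embed N r j (G j)).prod

theorem prodDescUpTo_zero : prodDescUpTo N r G 0 = 1 := by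
  simp [prodDescUpTo]

theorem prodDescUpTo_succ (k : ℕ) :
    prodDescUpTo N r G (k + 1) = embed N r (k + 1) (G (k + 1)) * prodDescUpTo N r G k := by
  rw [prodDescUpTo, List.range'_concat, show 1 + 1 * k = k + 1 by omega]
  simp [prodDescUpTo]

theorem prodDescUpTo_apply_of_le {k : ℕ} {i : Fin N} (hi : k + r ≤ i) (c : Fin N) :
    prodDescUpTo N r G k i c = (1 : Matrix (Fin N) (Fin N) ℂ) i c := by
  induction k with
  | zero => rw [prodDescUpTo_zero]
  | succ k ih =>
    rw [prodDescUpTo_succ, embed_eq_blockEmbed,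
      blockEmbed_mul_apply_of_not_window _ _ (Or.inr (by omega)), ih (by omega)]

theorem prodDescUpTo_apply_of_lt_of_le {k l : ℕ} {i : Fin N} (hik : (i : ℕ) < k) (hkl : k ≤ l)
    (c : Fin N) : prodDescUpTo N r G l i c = prodDescUpTo N r G k i c := by
  induction l, hkl using Nat.le_induction with
  | base => rfl
  | succ l hkl ih =>
    rw [prodDescUpTo_succ, embed_eq_blockEmbed,
      blockEmbed_mul_apply_of_not_window _ _ (Or.inl (by omega)), ih]

theorem prodDescUpTo_apply_add {k : ℕ} (hk : k + r ≤ N) (i : Fin N) (m : Fin r)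
    (him : (i : ℕ) = k + m) (c : Fin N) :
    prodDescUpTo N r G k i c
      = greenKernel (fun j => blkA r (G j)) (fun j => blkQ r (G j)) N (k + 1) m c := by
  induction k generalizing i m with
  | zero =>
    rw [prodDescUpTo_zero, greenKernel_one_apply, Matrix.one_apply]
    simp only [Fin.ext_iff, him, zero_add]
  | succ k ih =>
    rw [show i = ⟨k + (m.succ : ℕ), by omega⟩ from Fin.ext (by simp only [Fin.val_succ]; omega),
      prodDescUpTo_succ, embed_eq_blockEmbed, blockEmbed_mul_apply_window (by omega),
      Fin.sum_univ_castSucc, prodDescUpTo_apply_of_le _ (by simp) c,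
      greenKernel_succ_apply _ _ (by omega), Matrix.mul_apply, Matrix.one_apply]
    congr 1
    · exact Finset.sum_congr rfl fun m' _ => by rw [ih (by omega) _ m' (by simp)]; rfl
    · simp only [Fin.ext_iff, Fin.val_last, Nat.add_sub_cancel, eq_comm (a := k + r)]
      split_ifs <;> simp [blkQ]

theorem prodDesc_apply_bottom (hrN : r ≤ N) (t : Fin r) (c : Fin N) :
    prodDesc N r G ⟨N - r + t, by omega⟩ c
      = greenKernel (fun j => blkA r (G j)) (fun j => blkQ r (G j)) N (N - r + 1) t c :=
  prodDescUpTo_apply_add G (by omega) _ t rfl c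

theorem prodDesc_apply_sub_one {k : ℕ} (hk : 1 ≤ k) (hkN : k ≤ N - r) {c : Fin N}
    (hc : (c : ℕ) + 1 < k + r) :
    prodDesc N r G ⟨k - 1, by omega⟩ c
      = (blkP r (G k) 0 ᵥ* greenKernel (fun j => blkA r (G j)) (fun j => blkQ r (G j)) N k) c := by
  obtain ⟨s, rfl⟩ : ∃ s, k = s + 1 := ⟨k - 1, by omega⟩
  rw [prodDesc, ← prodDescUpTo, prodDescUpTo_apply_of_lt_of_le G (k := s + 1) (by simp) hkN,
    prodDescUpTo_succ, embed_eq_blockEmbed]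
  have hrow : (⟨s + 1 - 1, by omega⟩ : Fin N) = ⟨s + ((0 : Fin (r + 1)) : ℕ), by omega⟩ :=
    Fin.ext (by simp)
  rw [hrow, blockEmbed_mul_apply_window (by omega), Fin.sum_univ_castSucc,
    prodDescUpTo_apply_of_le _ (by simp) c, Matrix.one_apply_ne (by simp [Fin.ext_iff]; omega),
    mul_zero, add_zero]
  exact Finset.sum_congr rfl fun m _ => by
    rw [prodDescUpTo_apply_add G (by omega) _ m (by simp)]
    rfl

end DescendingProduct

theorem Matrix.mul_nonsing_inv_unitary_mul {n α : Type*} [Fintype n] [DecidableEq n] [CommRing α]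
    [StarRing α] {U R : Matrix n n α} (hU : U ∈ unitaryGroup n α) (hR : IsUnit R) :
    R * (U * R)⁻¹ = star U := by
  rw [Matrix.mul_inv_rev, ← Matrix.mul_assoc,
    Matrix.mul_nonsing_inv _ ((Matrix.isUnit_iff_isUnit_det R).mp hR), Matrix.one_mul]
  exact Matrix.inv_eq_left_inv (mem_unitaryGroup_iff'.mp hU)

section AscendingProduct

variable {N r : ℕ}

theorem conjTranspose_prodAsc (G : ℕ → Matrix (Fin (r + 1)) (Fin (r + 1)) ℂ) :
    (prodAsc N r G)ᴴ = prodDesc N r fun k => (G k)ᴴ := by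
  rw [prodAsc, conjTranspose_list_prod, prodDesc, List.map_map, ← List.map_reverse]
  refine congrArg List.prod (List.map_congr_left fun k hk => ?_)
  obtain ⟨s, rfl⟩ : ∃ s, k = s + 1 := ⟨k - 1, by simp at hk; omega⟩
  simp only [Function.comp_apply, embed_eq_blockEmbed, conjTranspose_blockEmbed]

theorem prodAsc_mem_unitaryGroup {G : ℕ → Matrix (Fin (r + 1)) (Fin (r + 1)) ℂ}
    (hG : ∀ k, 1 ≤ k → k ≤ N - r → G k ∈ unitaryGroup (Fin (r + 1)) ℂ) :
    prodAsc N r G ∈ unitaryGroup (Fin N) ℂ := by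
  refine Submonoid.list_prod_mem _ fun U hU => ?_
  obtain ⟨k, hk, rfl⟩ := List.mem_map.mp hU
  obtain ⟨s, rfl⟩ : ∃ s, k = s + 1 := ⟨k - 1, by simp at hk; omega⟩
  simp only [List.mem_range'_1] at hk
  rw [embed_eq_blockEmbed]
  exact blockEmbed_mem_unitaryGroup (by omega) (hG _ (by omega) (by omega))

end AscendingProduct

section KernelRows

variable {N r : ℕ} {a : ℕ → Matrix (Fin r) (Fin r) ℂ} {q : ℕ → Matrix (Fin r) (Fin 1) ℂ}
  {R B : Matrix (Fin N) (Fin N) ℂ} {P : ℕ → ℕ → Fin r → ℂ}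

/-- `P k t` is row `t` (0-based) of the paper's `P_k`, with `k` 1-based. -/
def KernelRowsFrom (B : Matrix (Fin N) (Fin N) ℂ) (P : ℕ → ℕ → Fin r → ℂ)
    (a : ℕ → Matrix (Fin r) (Fin r) ℂ) (q : ℕ → Matrix (Fin r) (Fin 1) ℂ) (k : ℕ) : Prop :=
  ∀ i : Fin N, k - 1 ≤ (i : ℕ) → ∀ c : Fin N, (c : ℕ) + 1 < k + r →
    B i c = (P k (i - (k - 1)) ᵥ* greenKernel a q N k) c

theorem kernelRowsFrom_last (hrN : r ≤ N) (hR : R.IsUpperTriangular)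
    (hdiag : ∀ i, IsUnit (R i i)) (V : Matrix (Fin r) (Fin r) ℂ)
    (hRB : ∀ (t : Fin r) (c : Fin N),
      (R * B) ⟨N - r + t, by omega⟩ c = (V * greenKernel a q N (N - r + 1)) t c)
    (hP : ∀ t j : Fin r, P (N - r + 1) t j
      = ((Matrix.of fun i j : Fin r => R ⟨N - r + i, by omega⟩ ⟨N - r + j, by omega⟩)⁻¹ * V) t j) :
    KernelRowsFrom B P a q (N - r + 1) := by
  set R₂ : Matrix (Fin r) (Fin r) ℂ :=
    Matrix.of fun i j : Fin r => R ⟨N - r + i, by omega⟩ ⟨N - r + j, by omega⟩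
  set Y : Matrix (Fin r) (Fin N) ℂ := Matrix.of fun t c => B ⟨N - r + t, by omega⟩ c
  have hR₂ : R₂.IsUpperTriangular := fun _ _ h => hR (Fin.mk_lt_mk.mpr (Nat.add_lt_add_left h _))
  have hR₂det : IsUnit R₂.det := hR₂.isUnit_det_iff.mpr fun _ => hdiag _
  have hY : Y = R₂⁻¹ * V * greenKernel a q N (N - r + 1) := by
    have hmul : R₂ * Y = V * greenKernel a q N (N - r + 1) := by
      ext t c
      rw [← hRB, hR.mul_apply_bottom B hrN]
      rfl
    rw [Matrix.mul_assoc, ← hmul, ← Matrix.mul_assoc, Matrix.nonsing_inv_mul _ hR₂det,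
      Matrix.one_mul]
  intro i hi c _
  have hrow : B i c = Y ⟨i - (N - r), by omega⟩ c := by
    simp only [Y, Matrix.of_apply]
    congr
    ext
    simp only
    omega
  rw [hrow, hY, Matrix.mul_apply, Nat.add_sub_cancel]
  exact Finset.sum_congr rfl fun l _ => by rw [hP ⟨i - (N - r), by omega⟩ l]

theorem KernelRowsFrom.apply_pred {k : ℕ} (hrows : KernelRowsFrom B P a q (k + 1))
    (hk : 1 ≤ k) (hkN : k ≤ N) (hR : R.IsUpperTriangular)
    (hx : R ⟨k - 1, by omega⟩ ⟨k - 1, by omega⟩ ≠ 0) (u : Fin r → ℂ)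
    (hRB : ∀ c : Fin N, (c : ℕ) + 1 < k + r →
      (R * B) ⟨k - 1, by omega⟩ c = (u ᵥ* greenKernel a q N k) c)
    (hP : ∀ j, P k 0 j = (1 / R ⟨k - 1, by omega⟩ ⟨k - 1, by omega⟩) * (u j
      - ∑ t : Fin (N - k), ∑ l : Fin r,
          R ⟨k - 1, by omega⟩ ⟨k + t, by omega⟩ * P (k + 1) t l * a k l j))
    {c : Fin N} (hc : (c : ℕ) + 1 < k + r) :
    B ⟨k - 1, by omega⟩ c = (P k 0 ᵥ* greenKernel a q N k) c := by
  have hP' : P k 0 = (R ⟨k - 1, by omega⟩ ⟨k - 1, by omega⟩)⁻¹ • (u - ∑ t : Fin (N - k),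
      R ⟨k - 1, by omega⟩ ⟨k + t, by omega⟩ • (P (k + 1) t ᵥ* a k)) := by
    ext j
    simp only [hP j, Pi.smul_apply, Pi.sub_apply, Finset.sum_apply, smul_eq_mul, Matrix.vecMul,
      dotProduct, Finset.mul_sum, mul_assoc, one_div]
  have hbelow : ∀ t : Fin (N - k), B ⟨k + t, by omega⟩ c
      = (P (k + 1) t ᵥ* a k ᵥ* greenKernel a q N k) c := by
    intro t
    rw [hrows _ (by simp) c (by omega), ← vecMul_greenKernel_succ_apply a q hk _ hc]
    simp
  have hback := hR.mul_apply_eq_diag_add B k hk hkN c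
  rw [hRB c hc] at hback
  rw [hP', Matrix.smul_vecMul, Matrix.sub_vecMul, Matrix.sum_vecMul]
  simp only [Matrix.smul_vecMul, Pi.smul_apply, Pi.sub_apply, Finset.sum_apply, smul_eq_mul,
    ← hbelow, hback]
  field_simp
  ring

theorem KernelRowsFrom.of_succ {k : ℕ} (hrows : KernelRowsFrom B P a q (k + 1)) (hk : 1 ≤ k)
    (hkN : k ≤ N)
    (hfirst : ∀ c : Fin N, (c : ℕ) + 1 < k + r →
      B ⟨k - 1, by omega⟩ c = (P k 0 ᵥ* greenKernel a q N k) c)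
    (hPsucc : ∀ t j, P k (t + 1) j = ∑ l : Fin r, P (k + 1) t l * a k l j) :
    KernelRowsFrom B P a q k := by
  intro i hi c hc
  rcases eq_or_lt_of_le hi with hi | hi
  · rw [show i = ⟨k - 1, by omega⟩ from Fin.ext hi.symm]
    simpa using hfirst c hc
  · have hPi : P k (i - (k - 1)) = P (k + 1) (i - k) ᵥ* a k := by
      ext j
      rw [show (i : ℕ) - (k - 1) = i - k + 1 by omega, hPsucc]
      rfl
    rw [hrows i (by omega) c (by omega), hPi, ← vecMul_greenKernel_succ_apply a q hk _ hc]
    simp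

end KernelRows

theorem isLowerGreenGenerators_of_kernelRowsFrom {N r : ℕ} (hNr : r < N)
    {B : Matrix (Fin N) (Fin N) ℂ} {p : ℕ → Matrix (Fin 1) (Fin r) ℂ}
    {a : ℕ → Matrix (Fin r) (Fin r) ℂ} {q : ℕ → Matrix (Fin r) (Fin 1) ℂ}
    {P : ℕ → ℕ → Fin r → ℂ} (hrows : ∀ k, 1 ≤ k → k ≤ N - r + 1 → KernelRowsFrom B P a q k)
    (hp : ∀ k, 1 ≤ k → k ≤ N - r → ∀ j, P k 0 j = p k 0 j) :
    IsLowerGreenGenerators N r hNr p q a (Matrix.of fun i j : Fin r => P (N - r + 1) i j) B := by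
  have hfirst : ∀ i (hi1 : 1 ≤ i) (hi2 : i ≤ N - r) (c : Fin N), (c : ℕ) + 1 < i + r →
      B ⟨i - 1, by omega⟩ c = ∑ l, p i 0 l * greenKernel a q N i l c := by
    intro i hi1 hi2 c hc
    rw [hrows i hi1 (by omega) _ le_rfl c hc]
    simp [Matrix.vecMul, dotProduct, hp i hi1 hi2]
  have hlast : ∀ (t : Fin r) (c : Fin N), B ⟨N - r + t, by omega⟩ c
      = ∑ l, P (N - r + 1) t l * greenKernel a q N (N - r + 1) l c := by
    intro t c
    rw [hrows (N - r + 1) (by omega) le_rfl _ (by simp) c (by omega)]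
    simp [Matrix.vecMul, dotProduct]
  refine ⟨fun i hi1 hi2 j => ?_, fun i hi1 hi2 s hs1 hs2 => ?_, fun t j => ?_,
    fun t s hs1 hs2 => ?_⟩
  · rw [hfirst i hi1 hi2 _ (by simp; omega)]
    simp [greenKernel, Matrix.mul_apply]
  · rw [hfirst i hi1 hi2 _ (by simp; omega), Matrix.mul_assoc, Matrix.mul_apply]
    simp [greenKernel, show ¬ r + s - 2 < r by omega, show r + s - 2 + 1 < i + r by omega,
      show r + s - 2 - r + 1 = s - 1 by omega]
  · rw [hlast, Matrix.mul_apply]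
    simp [greenKernel]
  · rw [hlast, Matrix.mul_assoc, Matrix.mul_apply]
    simp [greenKernel, show ¬ r + s - 2 < r by omega, show r + s - 2 + 1 < N - r + 1 + r by omega,
      show r + s - 2 - r + 1 = s - 1 by omega]

/-- **QR-based inversion of a lower band matrix.** If the invertible lower band matrix `A`
factors as `A = U·R` with `R` invertible upper triangular and `U` a product of embedded
unitary factors, then the data `q(k) = q_U(k)`, `a(k) = a_U(k)` (blocks of `U_k*`),
`P_{N-r+1} = (R(N-r+1:N, N-r+1:N))⁻¹·U_{N-r+1}*` and, recursively downwards,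
`p(k) = (1/x_k)·(p_U(k) − X_k·P_{k+1}·a(k))`, `P_k = (p(k); P_{k+1}·a(k))`,
yield lower Green generators `p(i), q(i), a(i), p(N-r+1) := P_{N-r+1}` of `A⁻¹`. -/
theorem qr_inversion_lowerBand (N r : ℕ) (hNr : r < N)
    (A : Matrix (Fin N) (Fin N) ℂ)
    (Uk : ℕ → Matrix (Fin (r + 1)) (Fin (r + 1)) ℂ) (Ulast : Matrix (Fin r) (Fin r) ℂ)
    (hUk : ∀ (k : ℕ), 1 ≤ k → k ≤ N - r → Uk k ∈ Matrix.unitaryGroup (Fin (r + 1)) ℂ)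
    (hUlast : Ulast ∈ Matrix.unitaryGroup (Fin r) ℂ)
    (R : Matrix (Fin N) (Fin N) ℂ) (hR : IsUnit R)
    (hRtri : ∀ i j : Fin N, (j : ℕ) < (i : ℕ) → R i j = 0)
    (hQR : A = (prodAsc N r Uk * embedLast N r Ulast) * R)
    -- the matrices `P_k` (of size `(N-k+1)×r`), encoded by their rows
    (P : ℕ → ℕ → Fin r → ℂ)
    (hPtop : ∀ (t : Fin r) (j : Fin r),
      P (N - r + 1) (t : ℕ) j
        = (((Matrix.of fun i j : Fin r =>
              R ⟨N - r + (i : ℕ), by have := i.isLt; omega⟩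
                ⟨N - r + (j : ℕ), by have := j.isLt; omega⟩)⁻¹) * Ulastᴴ) t j)
    (p : ℕ → Matrix (Fin 1) (Fin r) ℂ)
    (hp : ∀ (k : ℕ) (hk1 : 1 ≤ k) (hk2 : k ≤ N - r) (j : Fin r),
      p k 0 j = (1 / R ⟨k - 1, by omega⟩ ⟨k - 1, by omega⟩)
        * (blkP r ((Uk k)ᴴ) 0 j
            - ∑ t : Fin (N - k), ∑ l : Fin r,
                R ⟨k - 1, by omega⟩ ⟨k + (t : ℕ), by have := t.isLt; omega⟩
                  * P (k + 1) (t : ℕ) l * blkA r ((Uk k)ᴴ) l j))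
    (hPfirst : ∀ (k : ℕ) (hk1 : 1 ≤ k) (hk2 : k ≤ N - r) (j : Fin r),
      P k 0 j = p k 0 j)
    (hPrec : ∀ (k : ℕ) (hk1 : 1 ≤ k) (hk2 : k ≤ N - r) (t : ℕ) (j : Fin r),
      P k (t + 1) j = ∑ l : Fin r, P (k + 1) t l * blkA r ((Uk k)ᴴ) l j) :
    IsLowerGreenGenerators N r hNr p (fun k => blkQ r ((Uk k)ᴴ))
      (fun k => blkA r ((Uk k)ᴴ))
      (Matrix.of fun i j : Fin r => P (N - r + 1) (i : ℕ) j) A⁻¹ := by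
  have hRtri' : R.IsUpperTriangular := fun i j h => hRtri i j h
  have hdiag : ∀ i, IsUnit (R i i) :=
    hRtri'.isUnit_det_iff.mp ((Matrix.isUnit_iff_isUnit_det R).mp hR)
  have hRA : R * A⁻¹ = blockEmbed N (N - r) Ulastᴴ * prodDesc N r fun k => (Uk k)ᴴ := by
    rw [hQR, Matrix.mul_nonsing_inv_unitary_mul
      (mul_mem (prodAsc_mem_unitaryGroup hUk)
        (embedLast_eq_blockEmbed hNr.le Ulast ▸ blockEmbed_mem_unitaryGroup (by omega) hUlast))
      hR, star_eq_conjTranspose, conjTranspose_mul, embedLast_eq_blockEmbed hNr.le,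
      conjTranspose_blockEmbed, conjTranspose_prodAsc]
  have hlast : KernelRowsFrom A⁻¹ P (fun k => blkA r ((Uk k)ᴴ)) (fun k => blkQ r ((Uk k)ᴴ))
      (N - r + 1) := by
    refine kernelRowsFrom_last hNr.le hRtri' hdiag Ulastᴴ (fun t c => ?_) hPtop
    rw [hRA, blockEmbed_mul_apply_window (by omega), Matrix.mul_apply]
    exact Finset.sum_congr rfl fun l _ => by rw [prodDesc_apply_bottom _ hNr.le]
  refine isLowerGreenGenerators_of_kernelRowsFrom hNr (fun k hk1 hk2 => ?_) hPfirst
  induction hk2 using Nat.decreasingInduction with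
  | self => exact hlast
  | of_succ k hk ih =>
    have hrows := ih (by omega)
    refine hrows.of_succ hk1 (by omega)
      (fun c₀ hc₀ => hrows.apply_pred hk1 (by omega) hRtri' (hdiag _).ne_zero _ (fun c hc => ?_)
        (fun j => (hPfirst k hk1 (by omega) j).trans (hp k hk1 (by omega) j)) hc₀)
      (hPrec k hk1 (by omega))
    rw [hRA, blockEmbed_mul_apply_of_not_window _ _ (Or.inl (by simp; omega)),
      prodDesc_apply_sub_one _ hk1 (by omega) hc]
end
end

section
/- Let A be an N×N strongly regular complex lower band matrix of order r. Then A admits a factorization A = L·R with L unit lower triangular and R upper triangular, and the inverse L⁻¹ admits the factorization L⁻¹ = L̃_{N−r+1}·L̃_{N−r}·L̃_{N−r−1}⋯L̃_1 (product in decreasing order of indices), where the embedded factors are built from matrices of the form L_k = [[1, 0_{1×r}],[−f_k, I_r]] ∈ ℂ^{(r+1)×(r+1)} for some columns f_k ∈ ℂ^{r×1} (k = 1,…,N−r) and a unit lower triangular matrix L_{N−r+1} ∈ ℂ^{r×r}. -/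
open Matrix

noncomputable section

/-!
Gaussian elimination without pivoting runs to completion on a strongly regular matrix: each step
multiplies by a unit lower triangular matrix, which leaves the leading principal minors unchanged,
and once the first `c` columns are reduced the `(c+1)`-st minor is the product of the first
`c+1` pivots, so the next pivot is nonzero. Elimination also preserves the lower band of order
`r`, so the multipliers of step `k` live in rows `k+1, …, k+r`: for `k ≤ N - r` the `k`-th Gauss
transform is exactly `L̃_k`, and the last `r` transforms only touch the trailing `r × r` block,
where they multiply to `L̃_{N-r+1}`. The product `M` of all transforms is unit lower triangular
and `M A` is upper triangular, so `L = M⁻¹` and `R = M A`.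
-/

namespace Matrix

theorem mul_apply_self_of_isLowerTriangular {n R : Type*} [Fintype n] [LinearOrder n]
    [CommRing R] {M N : Matrix n n R} (hM : M.IsLowerTriangular) (hN : N.IsLowerTriangular)
    (i : n) : (M * N) i i = M i i * N i i := by
  rw [mul_apply, Finset.sum_eq_single i]
  · intro l _ hli
    rcases lt_or_gt_of_ne hli with hlt | hgt
    · rw [hN (show OrderDual.toDual i < OrderDual.toDual l from hlt), mul_zero]
    · rw [hM (show OrderDual.toDual l < OrderDual.toDual i from hgt), zero_mul]
  · simp

section UnitLowerTriangular

variable {n R : Type*} [Fintype n] [DecidableEq n] [LinearOrder n] [CommRing R]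

def unitLowerTriangular : Submonoid (Matrix n n R) where
  carrier := {M | M.IsLowerTriangular ∧ ∀ i, M i i = 1}
  one_mem' := ⟨blockTriangular_one, fun i => one_apply_eq i⟩
  mul_mem' := fun {M N} hM hN =>
    ⟨hM.1.mul hN.1, fun i => by
      rw [mul_apply_self_of_isLowerTriangular hM.1 hN.1, hM.2, hN.2, one_mul]⟩

theorem det_of_mem_unitLowerTriangular {M : Matrix n n R} (hM : M ∈ unitLowerTriangular) :
    M.det = 1 := by
  rw [det_of_isLowerTriangular M hM.1]
  exact Finset.prod_eq_one fun i _ => hM.2 i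

theorem inv_mem_unitLowerTriangular {M : Matrix n n R} (hM : M ∈ unitLowerTriangular) :
    M⁻¹ ∈ unitLowerTriangular := by
  have hdet : IsUnit M.det := by rw [det_of_mem_unitLowerTriangular hM]; exact isUnit_one
  have := M.invertibleOfIsUnitDet hdet
  have hinv : M⁻¹.IsLowerTriangular := blockTriangular_inv_of_blockTriangular hM.1
  refine ⟨hinv, fun i => ?_⟩
  have h := congr_fun (congr_fun (nonsing_inv_mul M hdet) i) i
  rwa [mul_apply_self_of_isLowerTriangular hinv hM.1, hM.2, mul_one, one_apply_eq] at h

theorem submatrix_mem_unitLowerTriangular {m : Type*} [Fintype m] [DecidableEq m]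
    [LinearOrder m] {M : Matrix n n R} (hM : M ∈ unitLowerTriangular) {e : m → n}
    (he : StrictMono e) : M.submatrix e e ∈ unitLowerTriangular :=
  ⟨fun _ _ hij => hM.1 (he hij), fun i => hM.2 (e i)⟩

end UnitLowerTriangular

section IdentityOutside

variable {n R : Type*} [Fintype n] [DecidableEq n] [Semiring R]

def identityOutside (S : Set n) : Submonoid (Matrix n n R) where
  carrier := {M | ∀ i j, M i j ≠ (1 : Matrix n n R) i j → i ∈ S ∧ j ∈ S}
  one_mem' := fun _ _ h => absurd rfl h
  mul_mem' := fun {M N} hM hN i j hij => by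
    by_contra hout
    rcases not_and_or.mp hout with hi | hj
    · have hMi : ∀ l, M i l = (1 : Matrix n n R) i l := fun l =>
        by_contra fun h => hi (hM i l h).1
      have hMN : (M * N) i j = N i j := by
        rw [mul_apply]; simp only [hMi]; rw [← mul_apply, Matrix.one_mul]
      exact hi (hN i j (hMN ▸ hij)).1
    · have hNj : ∀ l, N l j = (1 : Matrix n n R) l j := fun l =>
        by_contra fun h => hj (hN l j h).2
      have hMN : (M * N) i j = M i j := by
        rw [mul_apply]; simp only [hNj]; rw [← mul_apply, Matrix.mul_one]
      exact hj (hM i j (hMN ▸ hij)).2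

end IdentityOutside

theorem submatrix_castLE_mul_of_isLowerTriangular {R : Type*} [CommRing R] {m N : ℕ}
    (h : m ≤ N) {T : Matrix (Fin N) (Fin N) R} (hT : T.IsLowerTriangular)
    (B : Matrix (Fin N) (Fin N) R) :
    (T * B).submatrix (Fin.castLE h) (Fin.castLE h)
      = T.submatrix (Fin.castLE h) (Fin.castLE h) * B.submatrix (Fin.castLE h) (Fin.castLE h) := by
  ext i j
  simp only [submatrix_apply, mul_apply]
  refine (Fintype.sum_of_injective (Fin.castLE h) (Fin.castLE_injective h) _ _ ?_ fun _ => rfl).symm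
  intro l hl
  have hml : m ≤ (l : ℕ) := by
    by_contra hlt
    exact hl ⟨⟨l, by omega⟩, Fin.ext rfl⟩
  have hil : Fin.castLE h i < l := by rw [Fin.lt_def, Fin.val_castLE]; omega
  rw [hT (show OrderDual.toDual l < OrderDual.toDual (Fin.castLE h i) from hil), zero_mul]

end Matrix

section GaussTransform

variable {n K : Type*} [LinearOrder n] [Field K]

def gaussVec (B : Matrix n n K) (c : n) (i : n) : K :=
  if c < i then B i c / B c c else 0

theorem gaussVec_ne_zero {B : Matrix n n K} {c i : n} (h : gaussVec B c i ≠ 0) :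
    c < i ∧ B i c ≠ 0 := by
  unfold gaussVec at h
  split_ifs at h with hci
  · exact ⟨hci, (div_ne_zero_iff.mp h).1⟩
  · exact absurd rfl h

variable [DecidableEq n]

def gaussTransform (B : Matrix n n K) (c : n) : Matrix n n K :=
  1 - Matrix.vecMulVec (gaussVec B c) (Pi.single c 1)

theorem gaussTransform_apply_ne {B : Matrix n n K} {c i j : n}
    (h : gaussTransform B c i j ≠ (1 : Matrix n n K) i j) : j = c ∧ c < i ∧ B i c ≠ 0 := by
  have hv : gaussVec B c i * (Pi.single c (1 : K) : n → K) j ≠ 0 := by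
    simpa [gaussTransform, Matrix.vecMulVec_apply] using h
  refine ⟨by_contra fun hjc => hv ?_, gaussVec_ne_zero (left_ne_zero_of_mul hv)⟩
  rw [Pi.single_eq_of_ne hjc, mul_zero]

variable [Fintype n]

theorem gaussTransform_mem_unitLowerTriangular (B : Matrix n n K) (c : n) :
    gaussTransform B c ∈ Matrix.unitLowerTriangular := by
  refine ⟨fun i j hij => ?_, fun i => ?_⟩
  · have hij' : i < j := hij
    by_contra h
    rw [← Matrix.one_apply_ne hij'.ne] at h
    obtain ⟨rfl, hci, -⟩ := gaussTransform_apply_ne h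
    exact lt_asymm hci hij'
  · by_contra h
    rw [← Matrix.one_apply_eq i] at h
    obtain ⟨rfl, hci, -⟩ := gaussTransform_apply_ne h
    exact lt_irrefl _ hci

theorem gaussTransform_mul (B : Matrix n n K) (c : n) :
    gaussTransform B c * B = B - Matrix.vecMulVec (gaussVec B c) (B c) := by
  rw [gaussTransform, Matrix.sub_mul, Matrix.one_mul, Matrix.vecMulVec_mul,
    Matrix.single_one_vecMul]
  rfl

theorem gaussTransform_mul_apply_eq_zero {B : Matrix n n K} {c : n}
    (hB : ∀ i j, j < i → j < c → B i j = 0) (hc : B c c ≠ 0) {i j : n} (hji : j < i)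
    (hjc : j ≤ c) : (gaussTransform B c * B) i j = 0 := by
  rw [gaussTransform_mul, Matrix.sub_apply, Matrix.vecMulVec_apply]
  rcases hjc.lt_or_eq with hjc | rfl
  · rw [hB i j hji hjc, hB c j hjc hjc, mul_zero, sub_zero]
  · rw [gaussVec, if_pos hji, div_mul_cancel₀ _ hc, sub_self]

end GaussTransform

section GaussElimination

variable {N : ℕ} {K : Type*} [Field K]

def IsUpperTriangularUpTo (B : Matrix (Fin N) (Fin N) K) (m : ℕ) : Prop :=
  ∀ i j : Fin N, j < i → (j : ℕ) < m → B i j = 0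

def gaussElim (A : Matrix (Fin N) (Fin N) K) : ℕ → Matrix (Fin N) (Fin N) K
  | 0 => A
  | c + 1 => (if h : c < N then gaussTransform (gaussElim A c) ⟨c, h⟩ else 1) * gaussElim A c

def gaussFactor (A : Matrix (Fin N) (Fin N) K) (c : ℕ) : Matrix (Fin N) (Fin N) K :=
  if h : c < N then gaussTransform (gaussElim A c) ⟨c, h⟩ else 1

theorem gaussElim_succ (A : Matrix (Fin N) (Fin N) K) (c : ℕ) :
    gaussElim A (c + 1) = gaussFactor A c * gaussElim A c :=
  rfl

theorem gaussFactor_of_lt (A : Matrix (Fin N) (Fin N) K) {c : ℕ} (h : c < N) :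
    gaussFactor A c = gaussTransform (gaussElim A c) ⟨c, h⟩ :=
  dif_pos h

theorem list_prod_gaussFactor_mem_unitLowerTriangular (A : Matrix (Fin N) (Fin N) K)
    (l : List ℕ) :
    (l.map (gaussFactor A)).prod ∈ Matrix.unitLowerTriangular := by
  refine Submonoid.list_prod_mem _ fun T hT => ?_
  obtain ⟨c, -, rfl⟩ := List.mem_map.mp hT
  unfold gaussFactor
  split_ifs
  · exact gaussTransform_mem_unitLowerTriangular _ _
  · exact one_mem _

theorem gaussElim_eq_list_prod_mul (A : Matrix (Fin N) (Fin N) K) (m : ℕ) :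
    gaussElim A m = ((List.range m).reverse.map (gaussFactor A)).prod * A := by
  induction m with
  | zero => simp [gaussElim]
  | succ m ih =>
    rw [gaussElim_succ, ih, List.range_succ, List.reverse_append, List.map_append,
      List.prod_append, Matrix.mul_assoc]
    simp

end GaussElimination

section LowerBand

variable {N r : ℕ}

theorem StronglyRegular.unitLowerTriangular_mul {T A : Matrix (Fin N) (Fin N) ℂ}
    (hT : T ∈ Matrix.unitLowerTriangular) (hA : StronglyRegular N A) :
    StronglyRegular N (T * A) := by
  intro k hk hk1
  rw [Matrix.submatrix_castLE_mul_of_isLowerTriangular hk hT.1, Matrix.det_mul,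
    Matrix.det_of_mem_unitLowerTriangular
      (Matrix.submatrix_mem_unitLowerTriangular hT (Fin.strictMono_castLE hk)), one_mul]
  exact hA k hk hk1

theorem StronglyRegular.gaussElim {A : Matrix (Fin N) (Fin N) ℂ} (hA : StronglyRegular N A)
    (m : ℕ) : StronglyRegular N (gaussElim A m) := by
  rw [gaussElim_eq_list_prod_mul]
  exact hA.unitLowerTriangular_mul (list_prod_gaussFactor_mem_unitLowerTriangular A _)

theorem StronglyRegular.pivot_ne_zero {B : Matrix (Fin N) (Fin N) ℂ} (hB : StronglyRegular N B)
    {c : ℕ} (hc : c < N) (hred : IsUpperTriangularUpTo B c) :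
    B ⟨c, hc⟩ ⟨c, hc⟩ ≠ 0 := by
  have hdet := hB (c + 1) hc (Nat.succ_pos c)
  have htri : (B.submatrix (Fin.castLE hc) (Fin.castLE hc)).IsUpperTriangular :=
    fun i j hji => hred _ _ hji (by
      have : (j : ℕ) < i := hji
      simp only [Fin.val_castLE]; omega)
  rw [Matrix.det_of_isUpperTriangular htri] at hdet
  exact Finset.prod_ne_zero_iff.mp hdet (Fin.last c) (Finset.mem_univ _)

theorem IsLowerBand.gaussVec_ne_zero {B : Matrix (Fin N) (Fin N) ℂ} (hB : IsLowerBand N r B)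
    {c i : Fin N} (h : gaussVec B c i ≠ 0) : c < i ∧ (i : ℕ) ≤ c + r := by
  obtain ⟨hci, hic⟩ := _root_.gaussVec_ne_zero h
  exact ⟨hci, by by_contra hir; exact hic (hB i c (by omega))⟩

theorem IsLowerBand.gaussTransform_mul {B : Matrix (Fin N) (Fin N) ℂ} (hB : IsLowerBand N r B)
    {c : Fin N} (hred : ∀ i j, j < i → j < c → B i j = 0) :
    IsLowerBand N r (gaussTransform B c * B) := by
  intro i j hji
  rw [_root_.gaussTransform_mul, Matrix.sub_apply, Matrix.vecMulVec_apply, hB i j hji]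
  by_cases hv : gaussVec B c i = 0
  · rw [hv, zero_mul, sub_zero]
  · have hjc : j < c := by
      have := hB.gaussVec_ne_zero hv
      rw [Fin.lt_def]; omega
    rw [hred c j hjc hjc, mul_zero, sub_zero]

theorem gaussElim_isLowerBand_and_isUpperTriangularUpTo {A : Matrix (Fin N) (Fin N) ℂ}
    (hsr : StronglyRegular N A) (hband : IsLowerBand N r A) {m : ℕ} (hm : m ≤ N) :
    IsLowerBand N r (gaussElim A m) ∧ IsUpperTriangularUpTo (gaussElim A m) m := by
  induction m with
  | zero => exact ⟨hband, fun _ _ _ h => absurd h (Nat.not_lt_zero _)⟩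
  | succ m ih =>
    obtain ⟨hbandm, hredm⟩ := ih (by omega)
    have hmN : m < N := by omega
    rw [gaussElim_succ, gaussFactor_of_lt A hmN]
    refine ⟨hbandm.gaussTransform_mul fun i j => hredm i j, fun i j hji hjm => ?_⟩
    exact gaussTransform_mul_apply_eq_zero (fun i j => hredm i j)
      ((hsr.gaussElim m).pivot_ne_zero hmN hredm) hji (Nat.lt_succ_iff.mp hjm)

theorem gaussFactor_apply_ne {A : Matrix (Fin N) (Fin N) ℂ} (hsr : StronglyRegular N A)
    (hband : IsLowerBand N r A) {c : ℕ} {i j : Fin N}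
    (h : gaussFactor A c i j ≠ (1 : Matrix (Fin N) (Fin N) ℂ) i j) :
    (j : ℕ) = c ∧ c < (i : ℕ) ∧ (i : ℕ) ≤ c + r := by
  by_cases hc : c < N
  · obtain ⟨hbandc, hupperc⟩ := gaussElim_isLowerBand_and_isUpperTriangularUpTo hsr hband hc.le
    rw [gaussFactor_of_lt A hc] at h
    obtain ⟨hj, hci, hic⟩ := gaussTransform_apply_ne h
    subst hj
    have hv : gaussVec (gaussElim A c) ⟨c, hc⟩ i ≠ 0 := by
      rw [gaussVec, if_pos hci]
      exact div_ne_zero hic ((hsr.gaussElim c).pivot_ne_zero hc hupperc)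
    exact ⟨rfl, hci, (hbandc.gaussVec_ne_zero hv).2⟩
  · simp [gaussFactor, hc] at h

end LowerBand

section Embedding

variable {N r : ℕ}

theorem eq_embed_elemL {T : Matrix (Fin N) (Fin N) ℂ} {c : ℕ} (hc : c + r < N)
    (hT : ∀ i j : Fin N, T i j ≠ (1 : Matrix (Fin N) (Fin N) ℂ) i j →
      (j : ℕ) = c ∧ c < (i : ℕ) ∧ (i : ℕ) ≤ c + r) :
    T = embed N r (c + 1)
      (elemL r (Matrix.of fun t _ => -T ⟨c + 1 + (t : ℕ), by omega⟩ ⟨c, by omega⟩)) := by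
  have hT' : ∀ i j : Fin N, ¬((j : ℕ) = c ∧ c < (i : ℕ) ∧ (i : ℕ) ≤ c + r) →
      T i j = if (i : ℕ) = j then 1 else 0 := fun i j h => by
    by_contra hne
    exact h (hT i j (by simpa [Matrix.one_apply, Fin.ext_iff] using hne))
  ext i j
  simp only [embed, elemL, Matrix.of_apply]
  split_ifs <;> first
    | (rw [hT' i j (by omega)]; split_ifs <;> first | rfl | omega)
    | (rw [neg_neg]; congr 1 <;> ext <;> simp only <;> omega)

theorem embedLast_submatrix_eq {T : Matrix (Fin N) (Fin N) ℂ} (hrN : r ≤ N)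
    (hT : T ∈ Matrix.identityOutside {i : Fin N | N - r ≤ (i : ℕ)}) :
    embedLast N r (T.submatrix (fun t : Fin r => ⟨N - r + t, by omega⟩)
      (fun t : Fin r => ⟨N - r + t, by omega⟩)) = T := by
  have hT' : ∀ i j : Fin N, ¬(N - r ≤ (i : ℕ) ∧ N - r ≤ (j : ℕ)) →
      T i j = if (i : ℕ) = j then 1 else 0 := fun i j h => by
    by_contra hne
    exact h (hT i j (by simpa [Matrix.one_apply, Fin.ext_iff] using hne))
  ext i j
  simp only [embedLast, Matrix.of_apply, Matrix.submatrix_apply]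
  split_ifs with h
  · congr 1 <;> ext <;> (simp only; omega)
  all_goals simp [hT' i j h, *]

end Embedding

theorem exists_embedLast_mul_prodDesc_eq {N r : ℕ} {A : Matrix (Fin N) (Fin N) ℂ}
    (hsr : StronglyRegular N A) (hband : IsLowerBand N r A) (hrN : r ≤ N) :
    ∃ (f : ℕ → Matrix (Fin r) (Fin 1) ℂ) (Llast : Matrix (Fin r) (Fin r) ℂ),
      Llast ∈ Matrix.unitLowerTriangular ∧
      embedLast N r Llast * prodDesc N r (fun k => elemL r (f k))
        = ((List.range N).reverse.map (gaussFactor A)).prod := by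
  have hembed : ∀ c, ∃ g, c + r < N → gaussFactor A c = embed N r (c + 1) (elemL r g) :=
    fun c => if hc : c + r < N then
      ⟨_, fun _ => eq_embed_elemL hc fun _ _ h => gaussFactor_apply_ne hsr hband h⟩
    else ⟨0, fun h => absurd h hc⟩
  choose g hg using hembed
  set P := ((List.range' (N - r) r).reverse.map (gaussFactor A)).prod
  have hPout : P ∈ Matrix.identityOutside {i : Fin N | N - r ≤ (i : ℕ)} := by
    refine Submonoid.list_prod_mem _ fun T hT => ?_
    obtain ⟨c, hc, rfl⟩ := List.mem_map.mp hT
    have hc : N - r ≤ c := (List.mem_range'_1.mp (List.mem_reverse.mp hc)).1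
    intro i j h
    have := gaussFactor_apply_ne hsr hband h
    exact ⟨(by omega : N - r ≤ (i : ℕ)), (by omega : N - r ≤ (j : ℕ))⟩
  -- `prodDesc` counts its factors from `1`: factor `k` comes from elimination step `k - 1`.
  refine ⟨fun k => g (k - 1), P.submatrix (fun t => ⟨N - r + t, by omega⟩)
    (fun t => ⟨N - r + t, by omega⟩), Matrix.submatrix_mem_unitLowerTriangular
    (list_prod_gaussFactor_mem_unitLowerTriangular A _) fun _ _ hab => Fin.mk_lt_mk.mpr (by omega),
    ?_⟩
  have hsplit : List.range N = List.range (N - r) ++ List.range' (N - r) r := by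
    rw [List.range'_eq_map_range, ← List.range_add, Nat.sub_add_cancel hrN]
  rw [embedLast_submatrix_eq hrN hPout, hsplit, List.reverse_append, List.map_append,
    List.prod_append, prodDesc, List.range'_eq_map_range, ← List.map_reverse, List.map_map]
  congr 1
  refine congrArg List.prod (List.map_congr_left fun c hc => ?_)
  have hc : c + r < N := by
    have := List.mem_range.mp (List.mem_reverse.mp hc)
    omega
  simp only [Function.comp_apply, Nat.add_comm 1 c]
  exact (hg c hc).symm

theorem stronglyRegular_lowerBand_lu_general (N r : ℕ) (hNr : r < N)
    (A : Matrix (Fin N) (Fin N) ℂ) (hsr : StronglyRegular N A)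
    (hband : IsLowerBand N r A) :
    ∃ (L R : Matrix (Fin N) (Fin N) ℂ)
      (f : ℕ → Matrix (Fin r) (Fin 1) ℂ) (Llast : Matrix (Fin r) (Fin r) ℂ),
      A = L * R ∧
      (∀ i j : Fin N, (i : ℕ) < (j : ℕ) → L i j = 0) ∧ (∀ i : Fin N, L i i = 1) ∧
      (∀ i j : Fin N, (j : ℕ) < (i : ℕ) → R i j = 0) ∧
      (∀ i j : Fin r, (i : ℕ) < (j : ℕ) → Llast i j = 0) ∧ (∀ i : Fin r, Llast i i = 1) ∧
      L⁻¹ = embedLast N r Llast * prodDesc N r (fun k => elemL r (f k)) := by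
  obtain ⟨f, Llast, hLlast, hM⟩ := exists_embedLast_mul_prodDesc_eq hsr hband hNr.le
  set M := embedLast N r Llast * prodDesc N r (fun k => elemL r (f k))
  have hMA : M * A = gaussElim A N := by rw [hM, gaussElim_eq_list_prod_mul]
  have hMmem : M ∈ Matrix.unitLowerTriangular :=
    hM ▸ list_prod_gaussFactor_mem_unitLowerTriangular A _
  have hdet : IsUnit M.det := by
    rw [Matrix.det_of_mem_unitLowerTriangular hMmem]; exact isUnit_one
  have hLmem := Matrix.inv_mem_unitLowerTriangular hMmem
  have hupper := (gaussElim_isLowerBand_and_isUpperTriangularUpTo hsr hband le_rfl).2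
  refine ⟨M⁻¹, gaussElim A N, f, Llast, ?_, fun i j h => hLmem.1 h, hLmem.2,
    fun i j h => hupper i j h j.isLt, fun i j h => hLlast.1 h, hLlast.2,
    Matrix.nonsing_inv_nonsing_inv M hdet⟩
  rw [← hMA, ← Matrix.mul_assoc, Matrix.nonsing_inv_mul M hdet, Matrix.one_mul]

/-- Every strongly regular lower band matrix `A` of order `r` admits a factorization
`A = L·R` with `L` unit lower triangular and `R` upper triangular, where
`L⁻¹ = L̃_{N-r+1}·L̃_{N-r}⋯L̃_1`, the embedded factors being built from elementary matrices
`L_k = [[1, 0], [-f_k, I_r]]` and a unit lower triangular `r×r` matrix `L_{N-r+1}`. -/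
theorem stronglyRegular_lowerBand_lu (N r : ℕ) (hr : 0 < r) (hNr : r < N)
    (A : Matrix (Fin N) (Fin N) ℂ) (hsr : StronglyRegular N A)
    (hband : IsLowerBand N r A) :
    ∃ (L R : Matrix (Fin N) (Fin N) ℂ)
      (f : ℕ → Matrix (Fin r) (Fin 1) ℂ) (Llast : Matrix (Fin r) (Fin r) ℂ),
      A = L * R ∧
      (∀ i j : Fin N, (i : ℕ) < (j : ℕ) → L i j = 0) ∧ (∀ i : Fin N, L i i = 1) ∧
      (∀ i j : Fin N, (j : ℕ) < (i : ℕ) → R i j = 0) ∧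
      (∀ i j : Fin r, (i : ℕ) < (j : ℕ) → Llast i j = 0) ∧ (∀ i : Fin r, Llast i i = 1) ∧
      L⁻¹ = embedLast N r Llast * prodDesc N r (fun k => elemL r (f k)) :=
  stronglyRegular_lowerBand_lu_general N r hNr A hsr hband
end
end
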